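/- Let f, g : ℂⁿ → ℂ be holomorphic and h = f·conj(g). A point z with f(z)g(z) ≠ 0 is a critical point of h (real derivative not surjective onto ℝ² ≅ ℂ) if and only if ‖grad f(z)‖·|g(z)| = ‖grad g(z)‖·|f(z)| and there exist suitable phases making the two gradient vectors proportional; in particular, if grad f(z) ≠ 0 and ‖(∂f/∂z_i)(z)·\overline{g(z)}‖ ≠ ‖f(z)·\overline{(∂g/∂z_i)}(z)‖ as vectors in ℂⁿ (i.e. the vectors (\bar g·grad f)(z) and (\bar f · \overline{grad g})(z) have different norms), then z is a regular point of h. -/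

import Mathlib

/-!
At `z` the real derivative of `f * conj g` is `v ↦ a v + conj (b v)` with the complex-linear
forms `a = conj (g z) • f'(z)` and `b = conj (f z) • g'(z)`. On a complex line `ℂ v` this map is
`t ↦ a v * t + conj (b v) * conj t`, which is onto `ℂ` as soon as `‖a v‖ ≠ ‖b v‖`. So at a critical
point `‖a v‖ = ‖b v‖` for all `v`; then `ker b ≤ ker a`, whence `a = μ • b` with `‖μ‖ = 1`.
Conversely, if `a = μ • b` with `‖μ‖ = 1`, the derivative takes values in a real line.
-/

open Function ComplexConjugate

theorem Complex.exists_mul_add_mul_conj_eq {A B : ℂ} (h : ‖A‖ ≠ ‖B‖) (w : ℂ) :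
    ∃ t : ℂ, A * t + B * conj t = w := by
  have hd : (normSq A : ℂ) - normSq B ≠ 0 := by
    rw [← ofReal_sub, ofReal_ne_zero, sub_ne_zero, normSq_eq_norm_sq, normSq_eq_norm_sq]
    exact mt (sq_eq_sq₀ (norm_nonneg _) (norm_nonneg _)).mp h
  -- Cramer's rule for the equation together with its complex conjugate
  refine ⟨(conj A * w - B * conj w) / (normSq A - normSq B), ?_⟩
  simp only [map_div₀, map_sub, map_mul, conj_conj, conj_ofReal]
  field_simp
  rw [← mul_conj, ← mul_conj]
  ring

namespace LinearMap

variable {E : Type*} [AddCommGroup E] [Module ℂ E] {a b : E →ₗ[ℂ] ℂ}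

theorem norm_apply_eq_of_not_surjective_add_conj
    (h : ¬ Surjective fun v => a v + conj (b v)) (v : E) : ‖a v‖ = ‖b v‖ := by
  by_contra hne
  refine h fun w => ?_
  obtain ⟨t, ht⟩ := Complex.exists_mul_add_mul_conj_eq (A := a v) (B := conj (b v))
    (by rwa [Complex.norm_conj]) w
  exact ⟨t • v, by simpa [mul_comm] using ht⟩

theorem exists_norm_eq_one_eq_smul_of_norm_apply_eq (h : ∀ v, ‖a v‖ = ‖b v‖) :
    ∃ μ : ℂ, ‖μ‖ = 1 ∧ a = μ • b := by
  by_cases hb : b = 0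
  · exact ⟨1, norm_one, ext fun v => by simpa [hb] using h v⟩
  have hker : ⨅ _ : Unit, ker b ≤ ker a := fun v hv => by
    simpa [← norm_eq_zero, h v] using hv
  obtain ⟨μ, rfl⟩ := Submodule.mem_span_singleton.mp
    (by simpa using mem_span_of_iInf_ker_le_ker hker)
  obtain ⟨v, hv⟩ := DFunLike.ne_iff.mp hb
  refine ⟨μ, (mul_eq_right₀ (norm_ne_zero_iff.mpr hv)).mp ?_, rfl⟩
  simpa using h v

theorem not_surjective_add_conj_of_eq_smul {μ : ℂ} (hμ : ‖μ‖ = 1) (hab : a = μ • b) :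
    ¬ Surjective fun v => a v + conj (b v) := by
  have hμ' : conj μ * μ = 1 := by simp [Complex.conj_mul', hμ]
  -- the range lies in the real line `{w | conj w = conj μ * w}`, which misses `1` or `I`
  have hrange : ∀ v, conj (a v + conj (b v)) = conj μ * (a v + conj (b v)) := fun v => by
    simp only [hab, smul_apply, smul_eq_mul, map_add, map_mul, Complex.conj_conj]
    linear_combination (-b v) * hμ'
  intro hs
  obtain ⟨v, hv⟩ := hs 1
  obtain ⟨u, hu⟩ := hs Complex.I
  have hμ1 : conj μ = 1 := by simpa [hv] using (hrange v).symm
  have hI := hrange u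
  simp only [hu, hμ1, Complex.conj_I, one_mul] at hI
  exact Complex.I_ne_zero (by linear_combination -hI / 2)

theorem not_surjective_add_conj_iff :
    ¬ Surjective (fun v => a v + conj (b v)) ↔ ∃ μ : ℂ, ‖μ‖ = 1 ∧ a = μ • b :=
  ⟨fun h => exists_norm_eq_one_eq_smul_of_norm_apply_eq
      (norm_apply_eq_of_not_surjective_add_conj h),
    fun ⟨_, hμ, hab⟩ => not_surjective_add_conj_of_eq_smul hμ hab⟩

end LinearMap

theorem fderiv_mul_conj_apply {E : Type*} [NormedAddCommGroup E] [NormedSpace ℂ E]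
    {f g : E → ℂ} {z : E} (hf : DifferentiableAt ℂ f z) (hg : DifferentiableAt ℂ g z)
    (v : E) :
    fderiv ℝ (fun w => f w * conj (g w)) z v
      = conj (g z) * fderiv ℂ f z v + f z * conj (fderiv ℂ g z v) := by
  have hconj : HasFDerivAt (fun w => conj (g w))
      (Complex.conjCLE.toContinuousLinearMap.comp ((fderiv ℂ g z).restrictScalars ℝ)) z :=
    Complex.conjCLE.hasFDerivAt.comp z (hg.hasFDerivAt.restrictScalars ℝ)
  have hmul : HasFDerivAt (fun w => f w * conj (g w)) _ z :=
    (hf.hasFDerivAt.restrictScalars ℝ).mul hconj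
  rw [hmul.fderiv]
  simp only [add_apply, smul_apply, ContinuousLinearMap.comp_apply,
    ContinuousLinearMap.coe_restrictScalars', ContinuousLinearEquiv.coe_coe,
    Complex.conjCLE_apply, smul_eq_mul]
  ring

theorem EuclideanSpace.linearMap_eq_iff_forall_single {ι 𝕜 M : Type*} [Fintype ι]
    [DecidableEq ι] [RCLike 𝕜] [AddCommMonoid M] [Module 𝕜 M]
    {φ ψ : EuclideanSpace 𝕜 ι →ₗ[𝕜] M} :
    φ = ψ ↔ ∀ i, φ (single i 1) = ψ (single i 1) :=
  ⟨fun h _ => h ▸ rfl, fun h => (basisFun ι 𝕜).toBasis.ext fun i => by simpa using h i⟩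

theorem Real.mul_sqrt_sum_sq {ι : Type*} [Fintype ι] {c : ℝ} (hc : 0 ≤ c) (x : ι → ℝ) :
    c * √(∑ i, x i ^ 2) = √(∑ i, (c * x i) ^ 2) := by
  simp_rw [mul_pow, ← Finset.mul_sum, Real.sqrt_mul (sq_nonneg c), Real.sqrt_sq hc]

theorem critical_point_characterization_general {n : ℕ}
    (f g : EuclideanSpace ℂ (Fin n) → ℂ)
    (hf : Differentiable ℂ f) (hg : Differentiable ℂ g)
    (z : EuclideanSpace ℂ (Fin n)) :
    ((¬ Surjective (fderiv ℝ (fun w => f w * (starRingEnd ℂ) (g w)) z)) ↔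
      (‖g z‖ * Real.sqrt (∑ i : Fin n, ‖fderiv ℂ f z (EuclideanSpace.single i 1)‖ ^ 2)
          = ‖f z‖ * Real.sqrt (∑ i : Fin n, ‖fderiv ℂ g z (EuclideanSpace.single i 1)‖ ^ 2)
        ∧ ∃ μ : ℂ, ‖μ‖ = 1 ∧ ∀ i : Fin n,
            (starRingEnd ℂ) (g z) * fderiv ℂ f z (EuclideanSpace.single i 1)
              = μ * ((starRingEnd ℂ) (f z) * fderiv ℂ g z (EuclideanSpace.single i 1)))) ∧
    ((∃ i : Fin n, fderiv ℂ f z (EuclideanSpace.single i 1) ≠ 0) →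
      Real.sqrt (∑ i : Fin n,
          ‖fderiv ℂ f z (EuclideanSpace.single i 1) * (starRingEnd ℂ) (g z)‖ ^ 2)
        ≠ Real.sqrt (∑ i : Fin n,
          ‖(starRingEnd ℂ) (f z) * (starRingEnd ℂ) (fderiv ℂ g z (EuclideanSpace.single i 1))‖ ^ 2) →
      Surjective (fderiv ℝ (fun w => f w * (starRingEnd ℂ) (g w)) z)) := by
  set F := fderiv ℂ f z
  set G := fderiv ℂ g z
  have hderiv : ⇑(fderiv ℝ (fun w => f w * conj (g w)) z)
      = fun v => (conj (g z) • (F : _ →ₗ[ℂ] ℂ)) v + conj ((conj (f z) • (G : _ →ₗ[ℂ] ℂ)) v) := by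
    ext v
    simp [fderiv_mul_conj_apply (hf z) (hg z), F, G]
  have hcrit : ¬ Surjective (fderiv ℝ (fun w => f w * conj (g w)) z) ↔ ∃ μ : ℂ, ‖μ‖ = 1 ∧
      ∀ i, conj (g z) * F (EuclideanSpace.single i 1)
        = μ * (conj (f z) * G (EuclideanSpace.single i 1)) := by
    rw [hderiv, LinearMap.not_surjective_add_conj_iff]
    simp [EuclideanSpace.linearMap_eq_iff_forall_single]
  have hnorm : ∀ μ : ℂ, ‖μ‖ = 1 → (∀ i, conj (g z) * F (EuclideanSpace.single i 1)
      = μ * (conj (f z) * G (EuclideanSpace.single i 1))) →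
      ∀ i, ‖g z‖ * ‖F (EuclideanSpace.single i 1)‖ = ‖f z‖ * ‖G (EuclideanSpace.single i 1)‖ :=
    fun μ hμ h i => by simpa [hμ] using congrArg norm (h i)
  refine ⟨hcrit.trans ⟨fun ⟨μ, hμ, h⟩ => ⟨?_, μ, hμ, h⟩, fun ⟨_, h⟩ => h⟩, fun _ hne => ?_⟩
  · simp_rw [Real.mul_sqrt_sum_sq (norm_nonneg _), hnorm μ hμ h]
  · by_contra hns
    obtain ⟨μ, hμ, h⟩ := hcrit.mp hns
    refine hne (congrArg Real.sqrt (Finset.sum_congr rfl fun i _ => ?_))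
    simp only [norm_mul, Complex.norm_conj]
    rw [mul_comm, hnorm μ hμ h i]

/-- For `h = f·conj g` and `z` with `f(z)·g(z) ≠ 0`: `z` is a critical
point of `h` iff `‖grad f(z)‖·|g(z)| = ‖grad g(z)‖·|f(z)|` and there is a unit phase
making the two gradient vectors proportional; in particular, if `grad f(z) ≠ 0` and the
vectors `conj(g)·grad f` and `conj(f)·conj(grad g)` have different norms, then `z` is a
regular point of `h`. -/
theorem critical_point_characterization {n : ℕ}
    (f g : EuclideanSpace ℂ (Fin n) → ℂ)
    (hf : Differentiable ℂ f) (hg : Differentiable ℂ g)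
    (z : EuclideanSpace ℂ (Fin n)) (hz : f z * g z ≠ 0) :
    ((¬ Surjective (fderiv ℝ (fun w => f w * (starRingEnd ℂ) (g w)) z)) ↔
      (‖g z‖ * Real.sqrt (∑ i : Fin n, ‖fderiv ℂ f z (EuclideanSpace.single i 1)‖ ^ 2)
          = ‖f z‖ * Real.sqrt (∑ i : Fin n, ‖fderiv ℂ g z (EuclideanSpace.single i 1)‖ ^ 2)
        ∧ ∃ μ : ℂ, ‖μ‖ = 1 ∧ ∀ i : Fin n,
            (starRingEnd ℂ) (g z) * fderiv ℂ f z (EuclideanSpace.single i 1)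
              = μ * ((starRingEnd ℂ) (f z) * fderiv ℂ g z (EuclideanSpace.single i 1)))) ∧
    ((∃ i : Fin n, fderiv ℂ f z (EuclideanSpace.single i 1) ≠ 0) →
      Real.sqrt (∑ i : Fin n,
          ‖fderiv ℂ f z (EuclideanSpace.single i 1) * (starRingEnd ℂ) (g z)‖ ^ 2)
        ≠ Real.sqrt (∑ i : Fin n,
          ‖(starRingEnd ℂ) (f z) * (starRingEnd ℂ) (fderiv ℂ g z (EuclideanSpace.single i 1))‖ ^ 2) →
      Surjective (fderiv ℝ (fun w => f w * (starRingEnd ℂ) (g w)) z)) :=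
  critical_point_characterization_general f g hf hg z
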